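/- arXiv:1911.11607 — 3 statements merged into one kernel-verified Lean document; each statement's English description precedes it below -/
import Mathlib

section
/- Let n ≥ 1, let M assign to each subset b of {1,…,n} a probability measure M(b) on a common measurable space and to each set b ∪ {0} a probability measure M(b ∪ {0}) on the same space, let p ∈ [0,1], and let f : [0,1] → [0,1] be a convex function such that T(M(b), M(b ∪ {0}))(α) ≥ f(α) for every subset b of {1,…,n} and every α ∈ [0,1]. Define the Poisson-subsampled output distributions μ = Σ_{b ⊆ {1,…,n}} p^{|b|}(1−p)^{n−|b|}·M(b) and μ' = Σ_{b ⊆ {1,…,n}} p^{|b|}(1−p)^{n−|b|}·( p·M(b ∪ {0}) + (1−p)·M(b) ). Then for every α ∈ [0,1], T(μ, μ')(α) ≥ p·f(α) + (1−p)·(1−α). -/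
open MeasureTheory Filter Set

/-- The trade-off function `T(P,Q)` of two measures. -/
noncomputable def tradeOff {Ω : Type*} [MeasurableSpace Ω] (P Q : Measure Ω) (α : ℝ) : ℝ :=
  sInf {β : ℝ | ∃ φ : Ω → ℝ, Measurable φ ∧ (∀ x, φ x ∈ Set.Icc (0:ℝ) 1) ∧
    (∫ x, φ x ∂P) ≤ α ∧ β = 1 - ∫ x, φ x ∂Q}

/-- `{1,…,n}` is modeled as the nonzero elements of `Fin (n+1)`; the embedding of a subset
`b ⊆ {1,…,n}` (a `Finset (Fin n)`) into `Fin (n+1)` is by `Fin.succ`. -/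
def liftSubset (n : ℕ) (b : Finset (Fin n)) : Finset (Fin (n + 1)) :=
  b.map ⟨Fin.succ, Fin.succ_injective n⟩

/-!
Write `g α = p f α + (1 - p)(1 - α)`, a convex function. For a single `b`, a test of size `≤ α`
against `M b` has type II error under `p M(b ∪ {0}) + (1 - p) M b` at least
`p T(M b, M(b ∪ {0}))(α) + (1 - p)(1 - α) ≥ g α`. Convex lower bounds on trade-off functions
survive mixing both arguments with common weights: a test of size exactly `α` against the mixture
has component sizes `α_b` averaging to `α`, its type II error is the average of errors
`≥ g α_b`, and Jensen's inequality gives `≥ g α`.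
-/

section TradeOff

variable {Ω : Type*} [MeasurableSpace Ω]

def IsTest (φ : Ω → ℝ) : Prop :=
  Measurable φ ∧ ∀ x, φ x ∈ Icc (0 : ℝ) 1

namespace IsTest

variable {φ : Ω → ℝ}

lemma integrable (hφ : IsTest φ) (ν : Measure Ω) [IsFiniteMeasure ν] : Integrable φ ν :=
  (integrable_const (1 : ℝ)).mono' hφ.1.aestronglyMeasurable <| .of_forall fun x => by
    rw [Real.norm_eq_abs, abs_le]
    exact ⟨by linarith [(hφ.2 x).1], (hφ.2 x).2⟩

lemma integral_mem_Icc (hφ : IsTest φ) (ν : Measure Ω) [IsProbabilityMeasure ν] :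
    ∫ x, φ x ∂ν ∈ Icc (0 : ℝ) 1 := by
  refine ⟨integral_nonneg fun x => (hφ.2 x).1, ?_⟩
  calc ∫ x, φ x ∂ν ≤ ∫ _, (1 : ℝ) ∂ν :=
        integral_mono (hφ.integrable ν) (integrable_const 1) fun x => (hφ.2 x).2
    _ = 1 := by simp

lemma exists_le_integral_eq (hφ : IsTest φ) (ν : Measure Ω) [IsProbabilityMeasure ν] {α : ℝ}
    (hφα : ∫ x, φ x ∂ν ≤ α) (hα : α ≤ 1) :
    ∃ ψ : Ω → ℝ, IsTest ψ ∧ φ ≤ ψ ∧ ∫ x, ψ x ∂ν = α := by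
  set α₀ := ∫ x, φ x ∂ν
  have hα₀ := hφ.integral_mem_Icc ν
  set t := (α - α₀) / (1 - α₀)
  have ht : t ∈ Icc (0 : ℝ) 1 :=
    ⟨div_nonneg (by linarith) (by linarith), div_le_one_of_le₀ (by linarith) (by linarith)⟩
  have hscale : t * (1 - α₀) = α - α₀ := by
    rcases eq_or_ne (1 - α₀) 0 with h | h
    · rw [h, mul_zero]; linarith
    · exact div_mul_cancel₀ _ h
  refine ⟨fun x => φ x + t * (1 - φ x), ⟨by have := hφ.1; fun_prop, fun x => ?_⟩, fun x => ?_, ?_⟩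
  · obtain ⟨h0, h1⟩ := hφ.2 x
    constructor <;> nlinarith [ht.1, ht.2]
  · nlinarith [ht.1, (hφ.2 x).2]
  · have hφi := hφ.integrable ν
    have hgap : Integrable (fun x => t * (1 - φ x)) ν :=
      ((integrable_const 1).sub hφi).const_mul t
    rw [integral_add hφi hgap, integral_const_mul, integral_sub (integrable_const 1) hφi]
    simp only [integral_const, probReal_univ, smul_eq_mul, one_mul]
    linarith

end IsTest

lemma tradeOff_le (P Q : Measure Ω) [IsProbabilityMeasure Q] {φ : Ω → ℝ} (hφ : IsTest φ)
    {α : ℝ} (hα : ∫ x, φ x ∂P ≤ α) :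
    tradeOff P Q α ≤ 1 - ∫ x, φ x ∂Q := by
  refine csInf_le ⟨0, ?_⟩ ⟨φ, hφ.1, hφ.2, hα, rfl⟩
  rintro β ⟨ψ, hψm, hψ01, -, rfl⟩
  linarith [(IsTest.integral_mem_Icc ⟨hψm, hψ01⟩ Q).2]

lemma le_tradeOff {P Q : Measure Ω} {α β : ℝ} (hα : 0 ≤ α)
    (h : ∀ φ : Ω → ℝ, IsTest φ → ∫ x, φ x ∂P ≤ α → β ≤ 1 - ∫ x, φ x ∂Q) :
    β ≤ tradeOff P Q α := by
  refine le_csInf ⟨_, 0, measurable_const, fun _ => ⟨le_rfl, zero_le_one⟩, by simpa, rfl⟩ ?_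
  rintro _ ⟨φ, hφm, hφ01, hφα, rfl⟩
  exact h φ ⟨hφm, hφ01⟩ hφα

lemma isProbabilityMeasure_ofReal_smul_add {p : ℝ} (hp : p ∈ Icc (0 : ℝ) 1) (P Q : Measure Ω)
    [IsProbabilityMeasure P] [IsProbabilityMeasure Q] :
    IsProbabilityMeasure (ENNReal.ofReal p • Q + ENNReal.ofReal (1 - p) • P) := by
  constructor
  simp only [Measure.coe_add, Measure.coe_smul, Pi.add_apply, Pi.smul_apply, measure_univ,
    smul_eq_mul, mul_one]
  rw [← ENNReal.ofReal_add hp.1 (sub_nonneg.2 hp.2), add_sub_cancel, ENNReal.ofReal_one]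

lemma le_tradeOff_ofReal_smul_add {P Q : Measure Ω} [IsProbabilityMeasure P]
    [IsProbabilityMeasure Q] {p : ℝ} (hp : p ∈ Icc (0 : ℝ) 1) {α β : ℝ} (hα : 0 ≤ α)
    (hβ : β ≤ tradeOff P Q α) :
    p * β + (1 - p) * (1 - α) ≤
      tradeOff P (ENNReal.ofReal p • Q + ENNReal.ofReal (1 - p) • P) α := by
  refine le_tradeOff hα fun φ hφ hφα => ?_
  have hq : 0 ≤ 1 - p := sub_nonneg.2 hp.2
  rw [integral_add_measure ((hφ.integrable Q).smul_measure ENNReal.ofReal_ne_top)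
      ((hφ.integrable P).smul_measure ENNReal.ofReal_ne_top),
    integral_smul_measure, integral_smul_measure, ENNReal.toReal_ofReal hp.1,
    ENNReal.toReal_ofReal hq, smul_eq_mul, smul_eq_mul]
  have hQφ := hβ.trans (tradeOff_le P Q hφ hφα)
  nlinarith [mul_le_mul_of_nonneg_left hQφ hp.1, mul_le_mul_of_nonneg_left hφα hq]

variable {ι : Type*} {s : Finset ι} {w : ι → ℝ} {ν : ι → Measure Ω}

lemma integral_finsetSum_ofReal_smul (hw : ∀ i ∈ s, 0 ≤ w i) {φ : Ω → ℝ}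
    (hφ : ∀ i ∈ s, Integrable φ (ν i)) :
    ∫ x, φ x ∂(∑ i ∈ s, ENNReal.ofReal (w i) • ν i) = ∑ i ∈ s, w i * ∫ x, φ x ∂ν i := by
  rw [integral_finsetSum_measure fun i hi => (hφ i hi).smul_measure ENNReal.ofReal_ne_top]
  refine Finset.sum_congr rfl fun i hi => ?_
  rw [integral_smul_measure, ENNReal.toReal_ofReal (hw i hi), smul_eq_mul]

lemma isProbabilityMeasure_finsetSum_ofReal_smul (hw : ∀ i ∈ s, 0 ≤ w i)
    (hw₁ : ∑ i ∈ s, w i = 1) (hν : ∀ i, IsProbabilityMeasure (ν i)) :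
    IsProbabilityMeasure (∑ i ∈ s, ENNReal.ofReal (w i) • ν i) := by
  constructor
  simp only [Measure.coe_finsetSum, Finset.sum_apply, Measure.smul_apply, measure_univ,
    smul_eq_mul, mul_one]
  rw [← ENNReal.ofReal_sum_of_nonneg hw, hw₁, ENNReal.ofReal_one]

theorem le_tradeOff_finsetSum_ofReal_smul (hw : ∀ i ∈ s, 0 ≤ w i) (hw₁ : ∑ i ∈ s, w i = 1)
    {P Q : ι → Measure Ω} (hP : ∀ i, IsProbabilityMeasure (P i))
    (hQ : ∀ i, IsProbabilityMeasure (Q i)) {g : ℝ → ℝ} (hg : ConvexOn ℝ (Icc 0 1) g)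
    (hPQ : ∀ i ∈ s, ∀ α ∈ Icc (0 : ℝ) 1, g α ≤ tradeOff (P i) (Q i) α)
    {α : ℝ} (hα : α ∈ Icc (0 : ℝ) 1) :
    g α ≤ tradeOff (∑ i ∈ s, ENNReal.ofReal (w i) • P i)
      (∑ i ∈ s, ENNReal.ofReal (w i) • Q i) α := by
  have := isProbabilityMeasure_finsetSum_ofReal_smul hw hw₁ hP
  refine le_tradeOff hα.1 fun φ hφ hφα => ?_
  -- `g` need not be monotone, so Jensen is applied to a test raised to size exactly `α`.
  obtain ⟨ψ, hψ, hφψ, hψα⟩ := hφ.exists_le_integral_eq _ hφα hα.2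
  have hPψ := integral_finsetSum_ofReal_smul hw fun i _ => hψ.integrable (P i)
  have hQψ := integral_finsetSum_ofReal_smul hw fun i _ => hψ.integrable (Q i)
  calc g α = g (∑ i ∈ s, w i • ∫ x, ψ x ∂P i) := by rw [← hψα, hPψ]; rfl
    _ ≤ ∑ i ∈ s, w i • g (∫ x, ψ x ∂P i) :=
      hg.map_sum_le hw hw₁ fun i _ => hψ.integral_mem_Icc (P i)
    _ ≤ ∑ i ∈ s, w i * (1 - ∫ x, ψ x ∂Q i) := by
      refine Finset.sum_le_sum fun i hi => mul_le_mul_of_nonneg_left ?_ (hw i hi)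
      exact (hPQ i hi _ (hψ.integral_mem_Icc (P i))).trans (tradeOff_le _ _ hψ le_rfl)
    _ = 1 - ∫ x, ψ x ∂(∑ i ∈ s, ENNReal.ofReal (w i) • Q i) := by
      simp only [hQψ, mul_sub, mul_one, Finset.sum_sub_distrib, hw₁]
    _ ≤ 1 - ∫ x, φ x ∂(∑ i ∈ s, ENNReal.ofReal (w i) • Q i) := by
      have := isProbabilityMeasure_finsetSum_ofReal_smul hw hw₁ hQ
      linarith [integral_mono (hφ.integrable (∑ i ∈ s, ENNReal.ofReal (w i) • Q i))
        (hψ.integrable _) hφψ]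

end TradeOff

lemma zero_notMem_liftSubset (n : ℕ) (b : Finset (Fin n)) :
    (0 : Fin (n + 1)) ∉ liftSubset n b := by
  simp [liftSubset, Fin.succ_ne_zero]

theorem stmt_1_general {Ω : Type*} [MeasurableSpace Ω] (n : ℕ)
    (M : Finset (Fin (n + 1)) → Measure Ω) (hM : ∀ b, IsProbabilityMeasure (M b))
    (p : ℝ) (hp : p ∈ Set.Icc (0:ℝ) 1)
    (f : ℝ → ℝ) (hconv : ConvexOn ℝ (Set.Icc (0:ℝ) 1) f)
    (hf : ∀ b : Finset (Fin (n + 1)), (0 : Fin (n + 1)) ∉ b →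
      ∀ α ∈ Set.Icc (0:ℝ) 1, f α ≤ tradeOff (M b) (M (insert 0 b)) α) :
    ∀ α ∈ Set.Icc (0:ℝ) 1,
      p * f α + (1 - p) * (1 - α) ≤
        tradeOff
          (∑ b : Finset (Fin n),
            ENNReal.ofReal (p ^ b.card * (1 - p) ^ (n - b.card)) • M (liftSubset n b))
          (∑ b : Finset (Fin n),
            ENNReal.ofReal (p ^ b.card * (1 - p) ^ (n - b.card)) •
              (ENNReal.ofReal p • M (insert 0 (liftSubset n b))
                + ENNReal.ofReal (1 - p) • M (liftSubset n b))) α := by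
  have hq : 0 ≤ 1 - p := sub_nonneg.2 hp.2
  have hw : ∀ b ∈ (Finset.univ : Finset (Finset (Fin n))),
      0 ≤ p ^ b.card * (1 - p) ^ (n - b.card) :=
    fun _ _ => mul_nonneg (pow_nonneg hp.1 _) (pow_nonneg hq _)
  have hw₁ : ∑ b : Finset (Fin n), p ^ b.card * (1 - p) ^ (n - b.card) = 1 := by
    rw [Fin.sum_pow_mul_eq_add_pow, add_sub_cancel, one_pow]
  have hg : ConvexOn ℝ (Icc 0 1) fun α => p * f α + (1 - p) * (1 - α) :=
    (hconv.smul hp.1).add <|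
      ((convexOn_const 1 (convex_Icc 0 1)).sub (concaveOn_id (convex_Icc 0 1))).smul hq
  intro α hα
  exact le_tradeOff_finsetSum_ofReal_smul hw hw₁ (fun _ => hM _)
    (fun _ => isProbabilityMeasure_ofReal_smul_add hp _ _) hg
    (fun b _ α hα => le_tradeOff_ofReal_smul_add hp hα.1
      (hf _ (zero_notMem_liftSubset n b) α hα)) hα

theorem stmt_1 {Ω : Type*} [MeasurableSpace Ω] (n : ℕ) (hn : 1 ≤ n)
    (M : Finset (Fin (n + 1)) → Measure Ω) (hM : ∀ b, IsProbabilityMeasure (M b))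
    (p : ℝ) (hp : p ∈ Set.Icc (0:ℝ) 1)
    (f : ℝ → ℝ) (hconv : ConvexOn ℝ (Set.Icc (0:ℝ) 1) f)
    (hrange : ∀ α ∈ Set.Icc (0:ℝ) 1, f α ∈ Set.Icc (0:ℝ) 1)
    (hf : ∀ b : Finset (Fin (n + 1)), (0 : Fin (n + 1)) ∉ b →
      ∀ α ∈ Set.Icc (0:ℝ) 1, f α ≤ tradeOff (M b) (M (insert 0 b)) α) :
    ∀ α ∈ Set.Icc (0:ℝ) 1,
      p * f α + (1 - p) * (1 - α) ≤
        tradeOff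
          (∑ b : Finset (Fin n),
            ENNReal.ofReal (p ^ b.card * (1 - p) ^ (n - b.card)) • M (liftSubset n b))
          (∑ b : Finset (Fin n),
            ENNReal.ofReal (p ^ b.card * (1 - p) ^ (n - b.card)) •
              (ENNReal.ofReal p • M (insert 0 (liftSubset n b))
                + ENNReal.ofReal (1 - p) • M (liftSubset n b))) α :=
  stmt_1_general n M hM p hp f hconv hf
end

section
/- Let g : [0,1] → ℝ be measurable with g(x) ≥ −1 for all x and ∫₀¹ g(x)⁴ dx < ∞. Then lim_{p→0⁺} (1/p²)·∫₀¹ [log(1 + p·g(x))]² dx = ∫₀¹ g(x)² dx, and lim_{p→0⁺} (1/p²)·∫₀¹ (1 + p·g(x))·[log(1 + p·g(x))]² dx = ∫₀¹ g(x)² dx (with the convention 0·log² 0 = 0). -/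
/-!
The inequality `x log² x ≤ (x - 1)²`, which after substituting `x = e^{2s}` is `|s| ≤ |sinh s|`,
gives `(1 + u) log²(1 + u) ≤ u²`, hence `log²(1 + u) ≤ 2u²` for `u ≥ -1/2`. For `p ≤ 1/2` both
integrands divided by `p²` are therefore dominated by `2 g²`, and they converge pointwise to `g²`
because `log (1 + p c) / p → c`; dominated convergence gives both limits.
-/

open MeasureTheory Filter Set Topology

namespace Real

theorem mul_log_sq_le_sq_sub_one (x : ℝ) : x * log x ^ 2 ≤ (x - 1) ^ 2 := by
  rcases le_or_gt x 0 with hx | hx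
  · nlinarith [sq_nonneg (log x), sq_nonneg (x - 1)]
  set s := log x / 2
  have hsinh : s ^ 2 ≤ sinh s ^ 2 := by
    rcases le_total 0 s with hs | hs
    · nlinarith [self_le_sinh_iff.2 hs]
    · nlinarith [sinh_le_self_iff.2 hs]
  have hx_eq : x = exp s ^ 2 := by
    rw [sq, ← exp_add, show s + s = log x by ring, exp_log hx]
  have hsub : (x - 1) ^ 2 = x * (2 * sinh s) ^ 2 := by
    rw [sinh_eq, exp_neg, hx_eq]
    field_simp
  rw [hsub, show log x = 2 * s by ring]
  nlinarith [mul_le_mul_of_nonneg_left hsinh hx.le]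

theorem log_one_add_sq_le {u : ℝ} (hu : -(1 / 2) ≤ u) : log (1 + u) ^ 2 ≤ 2 * u ^ 2 := by
  have h := mul_log_sq_le_sq_sub_one (1 + u)
  rw [add_sub_cancel_left] at h
  nlinarith [sq_nonneg (log (1 + u))]

theorem tendsto_log_one_add_mul_div (c : ℝ) :
    Tendsto (fun p => log (1 + p * c) / p) (𝓝[≠] 0) (𝓝 c) := by
  have hd : HasDerivAt (fun p => log (1 + p * c)) c 0 := by
    simpa using (((hasDerivAt_id (0:ℝ)).mul_const c).const_add 1).log (by simp)
  exact hd.tendsto_slope.congr fun p => by simp [slope_def_field]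

theorem tendsto_inv_sq_mul_log_one_add_mul_sq (c : ℝ) :
    Tendsto (fun p => 1 / p ^ 2 * log (1 + p * c) ^ 2) (𝓝[>] 0) (𝓝 (c ^ 2)) :=
  (((tendsto_log_one_add_mul_div c).mono_left (nhdsGT_le_nhdsNE 0)).pow 2).congr fun p => by ring

end Real

section

variable {α : Type*} [MeasurableSpace α] {μ : Measure α}

theorem tendsto_inv_sq_mul_integral_of_dominated {F : ℝ → α → ℝ} {f bound : α → ℝ}
    (hF_meas : ∀ p, AEStronglyMeasurable (F p) μ)
    (h_bound : ∀ᶠ p in 𝓝[>] 0, ∀ᵐ x ∂μ, ‖F p x‖ ≤ p ^ 2 * bound x)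
    (h_int : Integrable bound μ)
    (h_lim : ∀ᵐ x ∂μ, Tendsto (fun p => 1 / p ^ 2 * F p x) (𝓝[>] 0) (𝓝 (f x))) :
    Tendsto (fun p => 1 / p ^ 2 * ∫ x, F p x ∂μ) (𝓝[>] 0) (𝓝 (∫ x, f x ∂μ)) := by
  simp_rw [← integral_const_mul]
  refine tendsto_integral_filter_of_dominated_convergence bound
    (Eventually.of_forall fun p => (hF_meas p).const_mul _) ?_ h_int h_lim
  filter_upwards [h_bound, self_mem_nhdsWithin] with p hp (hp0 : 0 < p)
  filter_upwards [hp] with x hx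
  rw [norm_mul, norm_div, norm_one, norm_pow, Real.norm_of_nonneg hp0.le, one_div,
    inv_mul_le_iff₀ (by positivity)]
  exact hx

variable {g : α → ℝ}

theorem integrable_sq_of_integrable_pow_four [IsFiniteMeasure μ]
    (hg : AEStronglyMeasurable g μ) (h4 : Integrable (fun x => g x ^ 4) μ) :
    Integrable (fun x => g x ^ 2) μ :=
  ((integrable_const 1).add h4).mono' (hg.pow 2) <| Eventually.of_forall fun x => by
    rw [Real.norm_of_nonneg (sq_nonneg _), Pi.add_apply]
    nlinarith [sq_nonneg (g x ^ 2 - 1)]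

theorem aestronglyMeasurable_log_one_add_mul (hg : AEMeasurable g μ) (p : ℝ) :
    AEStronglyMeasurable (fun x => Real.log (1 + p * g x)) μ :=
  (Real.measurable_log.comp_aemeasurable ((hg.const_mul p).const_add 1)).aestronglyMeasurable

theorem one_half_le_one_add_mul {p u : ℝ} (hp : p ∈ Ioo (0 : ℝ) (1 / 2)) (hu : -1 ≤ u) :
    1 / 2 ≤ 1 + p * u := by
  nlinarith [hp.1, hp.2]

theorem tendsto_inv_sq_mul_integral_log_one_add_mul_sq (hg_meas : AEMeasurable g μ)
    (hg : ∀ᵐ x ∂μ, -1 ≤ g x) (hg2 : Integrable (fun x => g x ^ 2) μ) :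
    Tendsto (fun p => 1 / p ^ 2 * ∫ x, Real.log (1 + p * g x) ^ 2 ∂μ) (𝓝[>] 0)
      (𝓝 (∫ x, g x ^ 2 ∂μ)) := by
  refine tendsto_inv_sq_mul_integral_of_dominated
    (fun p => (aestronglyMeasurable_log_one_add_mul hg_meas p).pow 2) ?_ (hg2.const_mul 2)
    (Eventually.of_forall fun x => Real.tendsto_inv_sq_mul_log_one_add_mul_sq (g x))
  filter_upwards [Ioo_mem_nhdsGT (by norm_num : (0 : ℝ) < 1 / 2)] with p hp
  filter_upwards [hg] with x hx
  have := one_half_le_one_add_mul hp hx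
  calc ‖Real.log (1 + p * g x) ^ 2‖ ≤ 2 * (p * g x) ^ 2 := by
        rw [Real.norm_of_nonneg (sq_nonneg _)]
        exact Real.log_one_add_sq_le (by linarith)
    _ = p ^ 2 * (2 * g x ^ 2) := by ring

theorem tendsto_inv_sq_mul_integral_one_add_mul_mul_log_sq (hg_meas : AEMeasurable g μ)
    (hg : ∀ᵐ x ∂μ, -1 ≤ g x) (hg2 : Integrable (fun x => g x ^ 2) μ) :
    Tendsto (fun p => 1 / p ^ 2 * ∫ x, (1 + p * g x) * Real.log (1 + p * g x) ^ 2 ∂μ)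
      (𝓝[>] 0) (𝓝 (∫ x, g x ^ 2 ∂μ)) := by
  refine tendsto_inv_sq_mul_integral_of_dominated (fun p =>
      (((hg_meas.const_mul p).const_add 1).aestronglyMeasurable).mul
        ((aestronglyMeasurable_log_one_add_mul hg_meas p).pow 2)) ?_ hg2
    (Eventually.of_forall fun x => ?_)
  · filter_upwards [Ioo_mem_nhdsGT (by norm_num : (0 : ℝ) < 1 / 2)] with p hp
    filter_upwards [hg] with x hx
    have := one_half_le_one_add_mul hp hx
    calc ‖(1 + p * g x) * Real.log (1 + p * g x) ^ 2‖ ≤ (p * g x) ^ 2 := by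
          rw [Real.norm_of_nonneg (by positivity)]
          simpa using Real.mul_log_sq_le_sq_sub_one (1 + p * g x)
      _ = p ^ 2 * g x ^ 2 := by ring
  · have hone : Tendsto (fun p : ℝ => 1 + p * g x) (𝓝[>] 0) (𝓝 1) :=
      ((continuous_const.add (continuous_id.mul continuous_const)).tendsto' 0 1
        (by simp)).mono_left nhdsWithin_le_nhds
    simpa only [one_mul] using (hone.mul (Real.tendsto_inv_sq_mul_log_one_add_mul_sq (g x))).congr
      fun p => by ring

end

theorem stmt_16 (g : ℝ → ℝ) (hmeas : Measurable g)
    (hg : ∀ x ∈ Set.Icc (0:ℝ) 1, -1 ≤ g x)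
    (hint : IntegrableOn (fun x => g x ^ 4) (Set.Icc (0:ℝ) 1)) :
    Tendsto
      (fun p : ℝ => (1 / p ^ 2) *
        ∫ x in Set.Icc (0:ℝ) 1, Real.log (1 + p * g x) ^ 2)
      (nhdsWithin 0 (Set.Ioi 0))
      (nhds (∫ x in Set.Icc (0:ℝ) 1, g x ^ 2)) ∧
    Tendsto
      (fun p : ℝ => (1 / p ^ 2) *
        ∫ x in Set.Icc (0:ℝ) 1, (1 + p * g x) * Real.log (1 + p * g x) ^ 2)
      (nhdsWithin 0 (Set.Ioi 0))
      (nhds (∫ x in Set.Icc (0:ℝ) 1, g x ^ 2)) := by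
  have hg_ae := ae_restrict_of_forall_mem (μ := volume) measurableSet_Icc hg
  have hg2 := integrable_sq_of_integrable_pow_four hmeas.aestronglyMeasurable hint
  exact ⟨tendsto_inv_sq_mul_integral_log_one_add_mul_sq hmeas.aemeasurable hg_ae hg2,
    tendsto_inv_sq_mul_integral_one_add_mul_mul_log_sq hmeas.aemeasurable hg_ae hg2⟩
end

section
/- Let g : [0,1] → ℝ be measurable with g(x) ≥ −1 for all x and ∫₀¹ g(x)⁴ dx < ∞. Then lim_{p→0⁺} (1/p³)·∫₀¹ |log(1 + p·g(x))|³ dx = ∫₀¹ |g(x)|³ dx and lim_{p→0⁺} (1/p³)·∫₀¹ (1 + p·g(x))·|log(1 + p·g(x))|³ dx = ∫₀¹ |g(x)|³ dx; in particular both ∫₀¹ |log(1 + p·g(x))|³ dx and ∫₀¹ (1 + p·g(x))·|log(1 + p·g(x))|³ dx are o(p²) as p → 0⁺. -/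
/-!
For `p ∈ (0, 1/2)` and `g ≥ -1`, the quantity `t = p g(x)` stays in `[-1/2, ∞)`, where both
`|log (1 + t)|³` and `(1 + t) |log (1 + t)|³` are at most `8 |t|³`. After dividing by `p³` the
integrands are therefore dominated by `8 |g|³`, and they converge pointwise to `|g|³` because
`log (1 + t) ~ t` at `0`; dominated convergence gives both limits, `|g|³` being integrable
because `|g|³ ≤ 1 + g⁴` and `[0, 1]` has finite measure.
-/

open MeasureTheory Filter Set Topology

namespace Real

theorem abs_log_one_add_le_two_mul_abs {t : ℝ} (ht : -(1 / 2) ≤ t) :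
    |log (1 + t)| ≤ 2 * |t| := by
  rcases le_or_gt 0 t with h | h
  · rw [abs_of_nonneg (log_nonneg (by linarith)), abs_of_nonneg h]
    linarith [log_le_sub_one_of_pos (show 0 < 1 + t by linarith)]
  · have h1 : 0 < 1 + t := by linarith
    rw [abs_of_nonpos (log_nonpos h1.le (by linarith)), abs_of_neg h]
    have hlog := one_sub_inv_le_log_of_pos h1
    have hinv : (1 + t)⁻¹ ≤ 1 - 2 * t := by
      rw [inv_eq_one_div, div_le_iff₀ h1]
      nlinarith
    linarith

/-- Substituting `1 + t = s²`, this is `log s ≤ s - 1`. -/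
theorem one_add_mul_log_one_add_sq_le {t : ℝ} (ht : 0 ≤ t) :
    (1 + t) * log (1 + t) ^ 2 ≤ 4 * t ^ 2 := by
  obtain ⟨s, hs1, rfl⟩ : ∃ s, 1 ≤ s ∧ t = s ^ 2 - 1 :=
    ⟨√(1 + t), one_le_sqrt.mpr (by linarith), by rw [sq_sqrt (by linarith)]; ring⟩
  have hlog : log (1 + (s ^ 2 - 1)) = 2 * log s := by
    rw [add_sub_cancel, log_pow]; norm_num
  have hlog0 : 0 ≤ log s := log_nonneg hs1
  have hlog1 : log s ≤ s - 1 := log_le_sub_one_of_pos (by linarith)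
  have hsq : log s ^ 2 ≤ (s - 1) ^ 2 := pow_le_pow_left₀ hlog0 hlog1 2
  rw [hlog, add_sub_cancel]
  nlinarith [mul_le_mul_of_nonneg_left hsq (sq_nonneg s)]

theorem abs_log_one_add_pow_three_le {t : ℝ} (ht : -(1 / 2) ≤ t) :
    |log (1 + t)| ^ 3 ≤ 8 * |t| ^ 3 := by
  calc |log (1 + t)| ^ 3 ≤ (2 * |t|) ^ 3 :=
        pow_le_pow_left₀ (abs_nonneg _) (abs_log_one_add_le_two_mul_abs ht) 3
    _ = 8 * |t| ^ 3 := by ring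

theorem one_add_mul_abs_log_one_add_pow_three_le {t : ℝ} (ht : -(1 / 2) ≤ t) :
    (1 + t) * |log (1 + t)| ^ 3 ≤ 8 * |t| ^ 3 := by
  rcases le_or_gt 0 t with h | h
  · have hlog : 0 ≤ log (1 + t) := log_nonneg (by linarith)
    rw [abs_of_nonneg hlog, abs_of_nonneg h]
    have hlog_le : log (1 + t) ≤ t := by
      linarith [log_le_sub_one_of_pos (show 0 < 1 + t by linarith)]
    calc (1 + t) * log (1 + t) ^ 3 = (1 + t) * log (1 + t) ^ 2 * log (1 + t) := by ring
      _ ≤ 4 * t ^ 2 * t :=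
        mul_le_mul (one_add_mul_log_one_add_sq_le h) hlog_le hlog (by positivity)
      _ ≤ 8 * t ^ 3 := by nlinarith [pow_nonneg h 3]
  · calc (1 + t) * |log (1 + t)| ^ 3 ≤ 1 * (8 * |t| ^ 3) := by
          gcongr
          · linarith
          · exact abs_log_one_add_pow_three_le ht
      _ = 8 * |t| ^ 3 := one_mul _

theorem tendsto_one_div_pow_three_mul_abs_log_one_add_mul (c : ℝ) :
    Tendsto (fun p => 1 / p ^ 3 * |log (1 + p * c)| ^ 3) (𝓝[>] 0) (𝓝 (|c| ^ 3)) := by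
  have hderiv : HasDerivAt (fun p => log (1 + p * c)) c 0 := by
    simpa using ((hasDerivAt_mul_const (x := 0) c).const_add (1 : ℝ)).log (by simp)
  have hslope : Tendsto (slope (fun p => log (1 + p * c)) 0) (𝓝[>] 0) (𝓝 c) :=
    (hasDerivAt_iff_tendsto_slope.mp hderiv).mono_left (nhdsGT_le_nhdsNE 0)
  refine (hslope.abs.pow 3).congr' ?_
  filter_upwards [self_mem_nhdsWithin] with p (hp : 0 < p)
  rw [slope_def_field, zero_mul, add_zero, log_one, sub_zero, sub_zero, abs_div, div_pow,
    abs_of_pos hp, one_div_mul_eq_div]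

end Real

open Real

theorem tendsto_one_div_sq_mul_of_tendsto_one_div_pow_three_mul {f : ℝ → ℝ} {l : Filter ℝ}
    {L : ℝ} (hl : l ≤ 𝓝[≠] 0) (hf : Tendsto (fun p => 1 / p ^ 3 * f p) l (𝓝 L)) :
    Tendsto (fun p => 1 / p ^ 2 * f p) l (𝓝 0) := by
  have hp : Tendsto (fun p : ℝ => p) l (𝓝 0) :=
    tendsto_id.mono_left (hl.trans nhdsWithin_le_nhds)
  refine (zero_mul L ▸ hp.mul hf).congr' ?_
  filter_upwards [hl self_mem_nhdsWithin] with p (hp : p ≠ 0)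
  field_simp

section WeightedLogIntegral

variable {α : Type*} [MeasurableSpace α] {μ : Measure α} {g : α → ℝ}

theorem tendsto_one_div_pow_three_mul_integral_weighted_abs_log_one_add_mul {w : ℝ → ℝ}
    {C : ℝ} (hw_meas : Measurable w) (hw_cont : ContinuousAt w 0) (hw_zero : w 0 = 1)
    (hw_bound : ∀ t, -(1 / 2) ≤ t → |w t * |log (1 + t)| ^ 3| ≤ C * |t| ^ 3)
    (hg : AEMeasurable g μ) (hg_ge : ∀ᵐ x ∂μ, -1 ≤ g x)
    (hg_int : Integrable (fun x => |g x| ^ 3) μ) :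
    Tendsto (fun p => 1 / p ^ 3 * ∫ x, w (p * g x) * |log (1 + p * g x)| ^ 3 ∂μ) (𝓝[>] 0)
      (𝓝 (∫ x, |g x| ^ 3 ∂μ)) := by
  simp_rw [← integral_const_mul]
  refine tendsto_integral_filter_of_dominated_convergence (fun x => C * |g x| ^ 3)
    (Eventually.of_forall fun p => ?_) ?_ (hg_int.const_mul C) (ae_of_all _ fun x => ?_)
  · exact AEMeasurable.aestronglyMeasurable (by fun_prop)
  · filter_upwards [Ioo_mem_nhdsGT (by norm_num : (0 : ℝ) < 1 / 2)] with p ⟨hp0, hp⟩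
    filter_upwards [hg_ge] with x hx
    rw [norm_mul, norm_eq_abs, norm_eq_abs, abs_of_pos (by positivity : 0 < 1 / p ^ 3)]
    calc 1 / p ^ 3 * |w (p * g x) * |log (1 + p * g x)| ^ 3|
      _ ≤ 1 / p ^ 3 * (C * |p * g x| ^ 3) := by
          gcongr
          exact hw_bound _ (by nlinarith)
      _ = C * |g x| ^ 3 := by
          rw [abs_mul, abs_of_pos hp0]
          field_simp
  · have hw : Tendsto (fun p => w (p * g x)) (𝓝[>] 0) (𝓝 1) := by
      rw [← hw_zero]
      refine hw_cont.tendsto.comp ?_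
      exact ((continuous_mul_const (g x)).tendsto' 0 0 (zero_mul _)).mono_left nhdsWithin_le_nhds
    simpa [mul_left_comm] using hw.mul (tendsto_one_div_pow_three_mul_abs_log_one_add_mul (g x))

theorem integrable_abs_pow_three_of_integrable_pow_four [IsFiniteMeasure μ]
    (hg : AEMeasurable g μ) (hg4 : Integrable (fun x => g x ^ 4) μ) :
    Integrable (fun x => |g x| ^ 3) μ := by
  refine ((integrable_const (1 : ℝ)).add hg4).mono' (hg.abs.pow_const 3).aestronglyMeasurable
    (ae_of_all _ fun x => ?_)
  have h4 : |g x| ^ 4 = g x ^ 4 := by rw [pow_abs, abs_of_nonneg (by positivity : 0 ≤ g x ^ 4)]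
  rw [norm_of_nonneg (by positivity), Pi.add_apply, ← h4]
  nlinarith [abs_nonneg (g x), mul_nonneg (abs_nonneg (g x)) (sq_nonneg (|g x| - 1))]

end WeightedLogIntegral

theorem stmt_17 (g : ℝ → ℝ) (hmeas : Measurable g)
    (hg : ∀ x ∈ Set.Icc (0:ℝ) 1, -1 ≤ g x)
    (hint : IntegrableOn (fun x => g x ^ 4) (Set.Icc (0:ℝ) 1)) :
    Tendsto
      (fun p : ℝ => (1 / p ^ 3) *
        ∫ x in Set.Icc (0:ℝ) 1, |Real.log (1 + p * g x)| ^ 3)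
      (nhdsWithin 0 (Set.Ioi 0))
      (nhds (∫ x in Set.Icc (0:ℝ) 1, |g x| ^ 3)) ∧
    Tendsto
      (fun p : ℝ => (1 / p ^ 3) *
        ∫ x in Set.Icc (0:ℝ) 1, (1 + p * g x) * |Real.log (1 + p * g x)| ^ 3)
      (nhdsWithin 0 (Set.Ioi 0))
      (nhds (∫ x in Set.Icc (0:ℝ) 1, |g x| ^ 3)) ∧
    Tendsto
      (fun p : ℝ => (1 / p ^ 2) *
        ∫ x in Set.Icc (0:ℝ) 1, |Real.log (1 + p * g x)| ^ 3)
      (nhdsWithin 0 (Set.Ioi 0)) (nhds 0) ∧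
    Tendsto
      (fun p : ℝ => (1 / p ^ 2) *
        ∫ x in Set.Icc (0:ℝ) 1, (1 + p * g x) * |Real.log (1 + p * g x)| ^ 3)
      (nhdsWithin 0 (Set.Ioi 0)) (nhds 0) := by
  have hg_ge : ∀ᵐ x ∂volume.restrict (Icc (0 : ℝ) 1), -1 ≤ g x :=
    (ae_restrict_iff' measurableSet_Icc).mpr (ae_of_all _ hg)
  have hg_int := integrable_abs_pow_three_of_integrable_pow_four hmeas.aemeasurable hint
  have hlog : Tendsto (fun p => 1 / p ^ 3 * ∫ x in Icc (0 : ℝ) 1, |log (1 + p * g x)| ^ 3)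
      (𝓝[>] 0) (𝓝 (∫ x in Icc (0 : ℝ) 1, |g x| ^ 3)) := by
    simpa only [one_mul] using tendsto_one_div_pow_three_mul_integral_weighted_abs_log_one_add_mul
      measurable_const continuousAt_const rfl
      (fun t ht => by simpa only [one_mul, abs_pow, abs_abs] using abs_log_one_add_pow_three_le ht)
      hmeas.aemeasurable hg_ge hg_int
  have hweighted : Tendsto
      (fun p => 1 / p ^ 3 * ∫ x in Icc (0 : ℝ) 1, (1 + p * g x) * |log (1 + p * g x)| ^ 3)
      (𝓝[>] 0) (𝓝 (∫ x in Icc (0 : ℝ) 1, |g x| ^ 3)) :=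
    tendsto_one_div_pow_three_mul_integral_weighted_abs_log_one_add_mul (w := fun t => 1 + t)
      (by fun_prop) (by fun_prop) (add_zero 1)
      (fun t ht => by
        have : 0 ≤ 1 + t := by linarith
        rw [abs_of_nonneg (by positivity)]
        exact one_add_mul_abs_log_one_add_pow_three_le ht)
      hmeas.aemeasurable hg_ge hg_int
  exact ⟨hlog, hweighted,
    tendsto_one_div_sq_mul_of_tendsto_one_div_pow_three_mul (nhdsGT_le_nhdsNE 0) hlog,
    tendsto_one_div_sq_mul_of_tendsto_one_div_pow_three_mul (nhdsGT_le_nhdsNE 0) hweighted⟩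
end
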